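/- Let X be a real infinite-dimensional Banach space with a boundedly complete Schauder basis (x_n)_{n=1}^∞ with basis constant K, coordinate functionals (x*_n) and V the closed linear span of {x*_n : n ∈ ℕ} in X*. Then wck_X(B_X) ≤ (K+1)·d̂(B_{X*}, V). -/

import Mathlib

open Filter Metric NormedSpace Set Topology

noncomputable section

variable {E : Type*} [NormedAddCommGroup E] [NormedSpace ℝ E]

/-- `f` is the sequence of coordinate functionals of the Schauder basis `x`:
every vector has an expansion along `x`, and such expansions are unique. -/
structure IsSchauderBasis (x : ℕ → E) (f : ℕ → E →L[ℝ] ℝ) : Prop where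
  expand : ∀ v : E,
    Tendsto (fun n => ∑ i ∈ Finset.range n, f i v • x i) atTop (𝓝 v)
  unique : ∀ (a : ℕ → ℝ) (v : E),
    Tendsto (fun n => ∑ i ∈ Finset.range n, a i • x i) atTop (𝓝 v) → ∀ i, a i = f i v

/-- the `n`-th basis projection `P_n`. -/
def basisProj (x : ℕ → E) (f : ℕ → E →L[ℝ] ℝ) (n : ℕ) : E →L[ℝ] E :=
  ∑ i ∈ Finset.range n, (f i).smulRight (x i)

/-- closed linear span of `{y i : i ≥ n}`. -/
def tailSpan (y : ℕ → E) (n : ℕ) : Submodule ℝ E :=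
  (Submodule.span ℝ (y '' {i | n ≤ i})).topologicalClosure

/-- `‖g‖_n` : the norm of the restriction of `g` to the closed span of the tail of `y`. -/
def tailNorm (y : ℕ → E) (g : E →L[ℝ] ℝ) (n : ℕ) : ℝ :=
  ‖g.comp (tailSpan y n).subtypeL‖

/-- the quantity `sh` measuring how far a basic sequence is from being shrinking. -/
def sh (y : ℕ → E) : ℝ :=
  sSup ((fun g : E →L[ℝ] ℝ => limsup (tailNorm y g) atTop) '' {g | ‖g‖ ≤ 1})

/-- non-symmetrised Hausdorff distance `d̂(A,B)`. -/
def hdist (A B : Set E) : ℝ := sSup ((fun a => infDist a B) '' A)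

/-- ordinary distance between two sets. -/
def setDist (A B : Set E) : ℝ := sInf {d : ℝ | ∃ a ∈ A, ∃ b ∈ B, d = dist a b}

/-- `ca` measures how far a sequence is from being norm-Cauchy. -/
def ca (z : ℕ → E) : ℝ :=
  ⨅ n : ℕ, sSup {d : ℝ | ∃ k, n ≤ k ∧ ∃ l, n ≤ l ∧ d = ‖z k - z l‖}

/-- measure of non-separability. -/
def sep (A : Set E) : ℝ :=
  sInf {ε : ℝ | 0 < ε ∧ ∃ C : Set E, C.Countable ∧ ∀ a ∈ A, ∃ c ∈ C, ‖a - c‖ ≤ ε}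

/-- `V`: the closed linear span of the coordinate functionals. -/
def dualSpan (g : ℕ → E →L[ℝ] ℝ) : Submodule ℝ (StrongDual ℝ E) :=
  (Submodule.span ℝ (Set.range g)).topologicalClosure

lemma mem_dualSpan (g : ℕ → E →L[ℝ] ℝ) (i : ℕ) : g i ∈ dualSpan g :=
  Submodule.le_topologicalClosure _ (Submodule.subset_span ⟨i, rfl⟩)

/-- the quantity `bc₁` measuring non-bounded-completeness. -/
def bc1 (y : ℕ → E) : ℝ :=
  sSup {c : ℝ | ∃ a : ℕ → ℝ,
    (∀ n, ‖∑ i ∈ Finset.range n, a i • y i‖ ≤ 1) ∧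
    c = ca (fun n => ∑ i ∈ Finset.range n, a i • y i)}

/-- the quantity `bc₂`. -/
def bc2 (y : ℕ → E) (g : ℕ → E →L[ℝ] ℝ) : ℝ :=
  sSup {c : ℝ | ∃ φ : ↥(dualSpan g) →L[ℝ] ℝ,
    @Norm.norm _ (@ContinuousLinearMap.hasOpNorm ℝ ℝ (dualSpan g) ℝ _ _ _ _ _ _ (RingHom.id ℝ)) φ ≤ 1 ∧
    c = ca (fun n => ∑ i ∈ Finset.range n, φ ⟨g i, mem_dualSpan g i⟩ • y i)}

/-- the quantity `bc₃`. -/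
def bc3 (y : ℕ → E) (g : ℕ → E →L[ℝ] ℝ) : ℝ :=
  sSup {c : ℝ | ∃ Φ : StrongDual ℝ (StrongDual ℝ E), ‖Φ‖ ≤ 1 ∧
    c = ca (fun n => ∑ i ∈ Finset.range n, Φ (g i) • y i)}

/-- `α_Y(X)`: measures how well `Y` embeds isomorphically into `X`. -/
def alpha (Y X : Type*) [NormedAddCommGroup Y] [NormedSpace ℝ Y]
    [NormedAddCommGroup X] [NormedSpace ℝ X] : ℝ :=
  sSup {c : ℝ | ∃ T : Y →L[ℝ] X, ‖T‖ ≤ 1 ∧ ∀ y : Y, c * ‖y‖ ≤ ‖T y‖}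

/-- `β_Y(X)`: measures how well `Y` embeds complementably into `X`. -/
def beta (Y X : Type*) [NormedAddCommGroup Y] [NormedSpace ℝ Y]
    [NormedAddCommGroup X] [NormedSpace ℝ X] : ℝ :=
  sSup {c : ℝ | ∃ (A : X →L[ℝ] Y) (B : Y →L[ℝ] X),
    A.comp B = ContinuousLinearMap.id ℝ Y ∧ c * (‖A‖ * ‖B‖) ≤ 1}

/-- weak-star closure of a subset of the bidual. -/
def wstarClosure {X : Type*} [NormedAddCommGroup X] [NormedSpace ℝ X]
    (S : Set (StrongDual ℝ (StrongDual ℝ X))) : Set (StrongDual ℝ (StrongDual ℝ X)) :=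
  {z | StrongDual.toWeakDual z ∈ closure (StrongDual.toWeakDual '' S)}

/-- the measure of weak non-compactness `wk_X(A)`. -/
def wk (X : Type*) [NormedAddCommGroup X] [NormedSpace ℝ X] (A : Set X) : ℝ :=
  hdist (wstarClosure ((inclusionInDoubleDual ℝ X) '' A))
    (Set.range (inclusionInDoubleDual ℝ X))

/-- weak-star cluster points in the bidual of a sequence in `X`. -/
def wclust {X : Type*} [NormedAddCommGroup X] [NormedSpace ℝ X] (u : ℕ → X) :
    Set (StrongDual ℝ (StrongDual ℝ X)) :=
  {z | MapClusterPt (StrongDual.toWeakDual z) atTop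
      (fun n => StrongDual.toWeakDual (inclusionInDoubleDual ℝ X (u n)))}

/-- the measure of weak non-compactness `wck_X(A)`. -/
def wck (X : Type*) [NormedAddCommGroup X] [NormedSpace ℝ X] (A : Set X) : ℝ :=
  sSup {c : ℝ | ∃ u : ℕ → X, (∀ n, u n ∈ A) ∧
    c = setDist (wclust u) (Set.range (inclusionInDoubleDual ℝ X))}


/-- the canonical map `j : X → V*` for a subspace `V` of the dual,
`⟨j v, x*⟩ = x*(v)`. -/
def jfun {X : Type*} [NormedAddCommGroup X] [NormedSpace ℝ X]
    (V : Submodule ℝ (StrongDual ℝ X)) (v : X) : ↥V →L[ℝ] ℝ :=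
  (inclusionInDoubleDual ℝ X v).comp V.subtypeL

/-- the space `ℓ₁` of absolutely summable real sequences. -/
abbrev ell1 : Type := lp (fun _ : ℕ => ℝ) 1

/-- the space `c₀` of real sequences converging to zero, with the sup norm. -/
abbrev czero : Type := ZeroAtInftyContinuousMap ℕ ℝ

end

/-!
A weak* cluster point `z ∈ B_{X**}` of a sequence in `B_X` has coordinates `z(x*_i)` whose partial
sums `∑_{i<n} z(x*_i) x_i` have norm at most `K`, because `x*(∑_{i<n} z(x*_i) x_i) = z(x* ∘ P_n)`.
Bounded completeness turns them into a vector `v` with `‖v‖ ≤ K` and the same coordinates, so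
`z - v` annihilates `V` and has norm at most `K + 1`. A functional `D` vanishing on `V` satisfies
`|D x*| ≤ ‖D‖ · dist(x*, V)`, whence `‖z - v‖ ≤ (K + 1) · d̂(B_{X*}, V)`.
-/

section Basis

variable {E : Type*} [NormedAddCommGroup E] [NormedSpace ℝ E] {x : ℕ → E} {f : ℕ → E →L[ℝ] ℝ}

lemma basisProj_apply (n : ℕ) (v : E) :
    basisProj x f n v = ∑ i ∈ Finset.range n, f i v • x i := by
  simp [basisProj]

lemma comp_basisProj (n : ℕ) (g : StrongDual ℝ E) :
    g.comp (basisProj x f n) = ∑ i ∈ Finset.range n, g (x i) • f i := by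
  ext v
  simp [basisProj_apply, mul_comm]

lemma IsSchauderBasis.bddAbove_norm_basisProj [CompleteSpace E] (hb : IsSchauderBasis x f) :
    BddAbove (range fun n => ‖basisProj x f n‖) := by
  obtain ⟨C, hC⟩ : ∃ C, ∀ n, ‖basisProj x f n‖ ≤ C := by
    refine banach_steinhaus fun v => ?_
    have hv : Tendsto (fun n => ‖basisProj x f n v‖) atTop (𝓝 ‖v‖) := by
      simpa only [basisProj_apply] using (hb.expand v).norm
    obtain ⟨C, hC⟩ := hv.bddAbove_range
    exact ⟨C, fun n => hC ⟨n, rfl⟩⟩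
  exact ⟨C, by rintro _ ⟨n, rfl⟩; exact hC n⟩

lemma norm_sum_apply_smul_le (n : ℕ) (z : StrongDual ℝ (StrongDual ℝ E)) :
    ‖∑ i ∈ Finset.range n, z (f i) • x i‖ ≤ ‖z‖ * ‖basisProj x f n‖ := by
  refine norm_le_dual_bound ℝ _ (by positivity) fun g => ?_
  have hg : g (∑ i ∈ Finset.range n, z (f i) • x i) = z (g.comp (basisProj x f n)) := by
    simp only [comp_basisProj, map_sum, map_smul, smul_eq_mul, mul_comm]
  calc ‖g (∑ i ∈ Finset.range n, z (f i) • x i)‖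
      = ‖z (g.comp (basisProj x f n))‖ := by rw [hg]
    _ ≤ ‖z‖ * (‖g‖ * ‖basisProj x f n‖) :=
        (z.le_opNorm _).trans (by gcongr; exact g.opNorm_comp_le _)
    _ = ‖z‖ * ‖basisProj x f n‖ * ‖g‖ := by ring

lemma IsSchauderBasis.exists_apply_eq_of_boundedlyComplete (hb : IsSchauderBasis x f)
    (hbdd : ∀ a : ℕ → ℝ, (∃ C : ℝ, ∀ n, ‖∑ i ∈ Finset.range n, a i • x i‖ ≤ C) →
      ∃ v : E, Tendsto (fun n => ∑ i ∈ Finset.range n, a i • x i) atTop (𝓝 v))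
    {K : ℝ} (hK : ∀ n, ‖basisProj x f n‖ ≤ K) (z : StrongDual ℝ (StrongDual ℝ E)) :
    ∃ v : E, ‖v‖ ≤ ‖z‖ * K ∧ ∀ i, z (f i) = f i v := by
  have hsum (n : ℕ) : ‖∑ i ∈ Finset.range n, z (f i) • x i‖ ≤ ‖z‖ * K :=
    (norm_sum_apply_smul_le n z).trans (by gcongr; exact hK n)
  obtain ⟨v, hv⟩ := hbdd (fun i => z (f i)) ⟨_, hsum⟩
  exact ⟨v, le_of_tendsto hv.norm (Eventually.of_forall hsum), hb.unique _ v hv⟩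

lemma dualSpan_le_ker {D : StrongDual ℝ (StrongDual ℝ E)}
    (hD : ∀ i, D (f i) = 0) : dualSpan f ≤ LinearMap.ker (D : StrongDual ℝ E →ₗ[ℝ] ℝ) := by
  refine Submodule.topologicalClosure_minimal _ ?_ D.isClosed_ker
  rw [Submodule.span_le]
  rintro _ ⟨i, rfl⟩
  exact hD i

end Basis

lemma setDist_le_dist {F : Type*} [NormedAddCommGroup F] {A B : Set F} {a b : F} (ha : a ∈ A)
    (hb : b ∈ B) : setDist A B ≤ dist a b :=
  csInf_le ⟨0, by rintro _ ⟨_, _, _, _, rfl⟩; exact dist_nonneg⟩ ⟨a, ha, b, hb, rfl⟩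

section Distances

variable {F : Type*} [NormedAddCommGroup F] [NormedSpace ℝ F]

lemma infDist_le_hdist_closedBall (V : Submodule ℝ F) {g : F} (hg : ‖g‖ ≤ 1) :
    infDist g V ≤ hdist (closedBall (0 : F) 1) V := by
  refine le_csSup ⟨1, ?_⟩ ⟨g, mem_closedBall_zero_iff.mpr hg, rfl⟩
  rintro _ ⟨a, ha, rfl⟩
  exact (infDist_le_dist_of_mem V.zero_mem).trans ha

lemma hdist_closedBall_nonneg (V : Submodule ℝ F) : 0 ≤ hdist (closedBall (0 : F) 1) V :=
  infDist_nonneg.trans (infDist_le_hdist_closedBall V (g := 0) (by simp))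

lemma ContinuousLinearMap.norm_apply_le_mul_infDist (D : F →L[ℝ] ℝ) {V : Submodule ℝ F}
    (hD : ∀ h ∈ V, D h = 0) (g : F) : ‖D g‖ ≤ ‖D‖ * infDist g V := by
  rcases (norm_nonneg D).eq_or_lt with hD0 | hDpos
  · simp [norm_eq_zero.mp hD0.symm]
  rw [← div_le_iff₀' hDpos, le_infDist ⟨0, V.zero_mem⟩]
  intro h hh
  rw [div_le_iff₀' hDpos, dist_eq_norm, ← sub_zero (D g), ← hD h hh, ← map_sub]
  exact D.le_opNorm _

lemma ContinuousLinearMap.norm_le_mul_hdist (D : F →L[ℝ] ℝ) {V : Submodule ℝ F}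
    (hD : ∀ h ∈ V, D h = 0) : ‖D‖ ≤ ‖D‖ * hdist (closedBall (0 : F) 1) V :=
  D.opNorm_le_of_unit_norm (mul_nonneg (norm_nonneg D) (hdist_closedBall_nonneg V))
    fun g hg => (D.norm_apply_le_mul_infDist hD g).trans
      (by gcongr; exact infDist_le_hdist_closedBall V hg.le)

end Distances

section WeakCompactness

variable {X : Type*} [NormedAddCommGroup X] [NormedSpace ℝ X]

lemma norm_le_of_mem_wclust {u : ℕ → X} {R : ℝ} (hR : 0 ≤ R) (hu : ∀ n, ‖u n‖ ≤ R)
    {z : StrongDual ℝ (StrongDual ℝ X)} (hz : z ∈ wclust u) : ‖z‖ ≤ R := by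
  refine z.opNorm_le_bound hR fun g => ?_
  have hcl : ClusterPt (z g) (map (fun n => g (u n)) atTop) :=
    hz.map (WeakDual.eval_continuous g).continuousAt tendsto_map
  have hball : ∀ n, g (u n) ∈ closedBall (0 : ℝ) (R * ‖g‖) := fun n => by
    rw [mem_closedBall_zero_iff, mul_comm]
    exact (g.le_opNorm _).trans (by gcongr; exact hu n)
  exact mem_closedBall_zero_iff.mp <| isClosed_closedBall.closure_subset <|
    mem_closure_iff_clusterPt.mpr <| hcl.mono <|
      le_principal_iff.mpr <| mem_map.mpr <| univ_mem' hball

lemma wck_le_of_forall_mem_wclust {A : Set X} {c : ℝ} (hc : 0 ≤ c)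
    (h : ∀ u : ℕ → X, (∀ n, u n ∈ A) → ∀ z ∈ wclust u,
      ∃ v : X, dist z (inclusionInDoubleDual ℝ X v) ≤ c) :
    wck X A ≤ c := by
  refine Real.sSup_le ?_ hc
  rintro _ ⟨u, hu, rfl⟩
  rcases (wclust u).eq_empty_or_nonempty with hempty | ⟨z, hz⟩
  · simp [setDist, hempty, hc]
  obtain ⟨v, hv⟩ := h u hu z hz
  exact (setDist_le_dist hz (mem_range_self v)).trans hv

end WeakCompactness

theorem wck_le_hdist_of_boundedlyComplete_general {X : Type*} [NormedAddCommGroup X]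
    [NormedSpace ℝ X] [CompleteSpace X]
    (x : ℕ → X) (f : ℕ → X →L[ℝ] ℝ) (hb : IsSchauderBasis x f)
    (K : ℝ) (hK : K = ⨆ n : ℕ, ‖basisProj x f n‖)
    (hbdd : ∀ a : ℕ → ℝ, (∃ C : ℝ, ∀ n, ‖∑ i ∈ Finset.range n, a i • x i‖ ≤ C) →
      ∃ v : X, Filter.Tendsto (fun n => ∑ i ∈ Finset.range n, a i • x i)
        Filter.atTop (nhds v)) :
    wck X (Metric.closedBall (0 : X) 1) ≤
      (K + 1) * hdist (Metric.closedBall (0 : StrongDual ℝ X) 1) (dualSpan f : Set (StrongDual ℝ X)) := by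
  have hKge (n : ℕ) : ‖basisProj x f n‖ ≤ K := hK ▸ le_ciSup hb.bddAbove_norm_basisProj n
  have hK0 : 0 ≤ K := (norm_nonneg _).trans (hKge 0)
  have hr0 := hdist_closedBall_nonneg (dualSpan f)
  refine wck_le_of_forall_mem_wclust (by positivity) fun u hu z hz => ?_
  have hz1 : ‖z‖ ≤ 1 :=
    norm_le_of_mem_wclust zero_le_one (fun n => mem_closedBall_zero_iff.mp (hu n)) hz
  obtain ⟨v, hvK, hzv⟩ := hb.exists_apply_eq_of_boundedlyComplete hbdd hKge z
  set D := z - inclusionInDoubleDual ℝ X v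
  have hDV : ∀ g ∈ dualSpan f, D g = 0 :=
    fun g hg => dualSpan_le_ker (D := D) (fun i => sub_eq_zero.mpr (hzv i)) hg
  have hD : ‖D‖ ≤ K + 1 :=
    calc ‖D‖ ≤ ‖z‖ + ‖v‖ :=
        (norm_sub_le z _).trans (add_le_add_right (double_dual_bound ℝ X v) _)
      _ ≤ 1 + K := by gcongr; exact hvK.trans (mul_le_of_le_one_left hK0 hz1)
      _ = K + 1 := add_comm _ _
  exact ⟨v, (dist_eq_norm _ _).trans_le ((D.norm_le_mul_hdist hDV).trans (by gcongr))⟩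

/-- Theorem 5.2(1): if the basis is boundedly complete then
`wck_X(B_X) ≤ (K+1)·d̂(B_{X*}, V)`. -/
theorem wck_le_hdist_of_boundedlyComplete {X : Type*} [NormedAddCommGroup X]
    [NormedSpace ℝ X] [CompleteSpace X] (hinf : ¬ FiniteDimensional ℝ X)
    (x : ℕ → X) (f : ℕ → X →L[ℝ] ℝ) (hb : IsSchauderBasis x f)
    (K : ℝ) (hK : K = ⨆ n : ℕ, ‖basisProj x f n‖)
    (hbdd : ∀ a : ℕ → ℝ, (∃ C : ℝ, ∀ n, ‖∑ i ∈ Finset.range n, a i • x i‖ ≤ C) →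
      ∃ v : X, Filter.Tendsto (fun n => ∑ i ∈ Finset.range n, a i • x i)
        Filter.atTop (nhds v)) :
    wck X (Metric.closedBall (0 : X) 1) ≤
      (K + 1) * hdist (Metric.closedBall (0 : StrongDual ℝ X) 1) (dualSpan f : Set (StrongDual ℝ X)) :=
  wck_le_hdist_of_boundedlyComplete_general x f hb K hK hbdd
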